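/- arXiv:1903.05243 — 2 statements merged into one kernel-verified Lean document; each statement's English description precedes it below -/
import Mathlib

section
/- Let k, j be integers with 0 ≤ j and j + 2 ≤ k + 1, and let ρ > 0 be a real number satisfying 1 − 4(k−j)ρ² − 2ρ > 0. Define the real sequence (a_i) by a_{j+2} = 1 − 4(k−j−1)ρ² − 2ρ and a_{i+1} = 1 − 4(k−i)ρ² − 2ρ + 2ρ√(a_i) for j+2 ≤ i ≤ k. Then a_{j+2} > 0 and a_{i+1} > a_i + 4ρ² for all j+2 ≤ i ≤ k; in particular all a_i (j+2 ≤ i ≤ k+1) are positive and the sequence is strictly increasing. -/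
open Filter

/-- Lambda-terms in De Bruijn notation. -/
inductive LTerm : Type
  | var : ℕ → LTerm
  | app : LTerm → LTerm → LTerm
  | lam : LTerm → LTerm

namespace LTerm

/-- The size of a term: its total number of nodes. -/
def size : LTerm → ℕ
  | var _ => 1
  | app s t => size s + size t + 1
  | lam t => size t + 1

/-- The number of variables (leaves) of a term. -/
def nvar : LTerm → ℕ
  | var _ => 1
  | app s t => nvar s + nvar t
  | lam t => nvar t

/-- Closedness with all De Bruijn indices at most `k`: under `d` enclosing
abstractions a variable `n` satisfies `1 ≤ n ≤ min d k`. -/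
def okIdx (k : ℕ) : ℕ → LTerm → Prop
  | d, var n => 1 ≤ n ∧ n ≤ d ∧ n ≤ k
  | d, app s t => okIdx k d s ∧ okIdx k d t
  | d, lam t => okIdx k (d + 1) t

/-- Closedness with at most `k` De Bruijn levels: at most `k` abstractions on
every root-to-leaf path, and a variable `n` under `d` abstractions satisfies
`1 ≤ n ≤ d`. -/
def okLev (k : ℕ) : ℕ → LTerm → Prop
  | d, var n => 1 ≤ n ∧ n ≤ d
  | d, app s t => okLev k d s ∧ okLev k d t
  | d, lam t => d < k ∧ okLev k (d + 1) t

/-- Number of variables at De Bruijn level `m` (current depth `d`). -/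
def nvarAt (m : ℕ) : ℕ → LTerm → ℕ
  | d, var _ => if d = m then 1 else 0
  | d, app s t => nvarAt m d s + nvarAt m d t
  | d, lam t => nvarAt m (d + 1) t

/-- Number of abstraction (unary) nodes at De Bruijn level `m`. -/
def nlamAt (m : ℕ) : ℕ → LTerm → ℕ
  | _, var _ => 0
  | d, app s t => nlamAt m d s + nlamAt m d t
  | d, lam t => (if d = m then 1 else 0) + nlamAt m (d + 1) t

/-- Number of application (binary) nodes at De Bruijn level `m`. -/
def nappAt (m : ℕ) : ℕ → LTerm → ℕ
  | _, var _ => 0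
  | d, app s t => (if d = m then 1 else 0) + nappAt m d s + nappAt m d t
  | d, lam t => nappAt m (d + 1) t

end LTerm

/-- The set of terms of `Λ_k` (closed, all De Bruijn indices at most `k`) of size `n`. -/
def LamIdx (k n : ℕ) : Set LTerm := {t | t.size = n ∧ LTerm.okIdx k 0 t}

/-- `T_n`: the number of terms of `Λ_k` of size `n`. -/
noncomputable def TIdx (k n : ℕ) : ℕ := (LamIdx k n).ncard

/-- `E[X_n]` for a uniformly random term of `Λ_k` of size `n`. -/
noncomputable def EIdx (k n : ℕ) : ℝ :=
  (∑ᶠ t ∈ LamIdx k n, (LTerm.nvar t : ℝ)) / (TIdx k n : ℝ)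

/-- `Var[X_n]` for a uniformly random term of `Λ_k` of size `n`. -/
noncomputable def VarIdx (k n : ℕ) : ℝ :=
  (∑ᶠ t ∈ LamIdx k n, ((LTerm.nvar t : ℝ) - EIdx k n) ^ 2) / (TIdx k n : ℝ)

/-- The set of terms of `H_k` (closed, at most `k` De Bruijn levels) of size `n`. -/
def LamLev (k n : ℕ) : Set LTerm := {t | t.size = n ∧ LTerm.okLev k 0 t}

/-- `T_n`: the number of terms of `H_k` of size `n`. -/
noncomputable def TLev (k n : ℕ) : ℕ := (LamLev k n).ncard

/-- The auxiliary sequence `u_0 = 0`, `u_{i+1} = u_i² + i + 1`. -/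
def useq : ℕ → ℕ
  | 0 => 0
  | i + 1 => (useq i) ^ 2 + i + 1

/-- The auxiliary sequence `N_i = u_i² − u_i + i`. -/
def Nseq (i : ℕ) : ℕ := (useq i) ^ 2 - useq i + i

/-- Average number of variables at De Bruijn level `m` over the terms of `H_k`
of size `n`. -/
noncomputable def avgVarLev (k m n : ℕ) : ℝ :=
  (∑ᶠ t ∈ LamLev k n, (LTerm.nvarAt m 0 t : ℝ)) / (TLev k n : ℝ)

/-- Average number of abstraction (unary) nodes at De Bruijn level `m` over the
terms of `H_k` of size `n`. -/
noncomputable def avgLamLev (k m n : ℕ) : ℝ :=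
  (∑ᶠ t ∈ LamLev k n, (LTerm.nlamAt m 0 t : ℝ)) / (TLev k n : ℝ)

/-- Average number of application (binary) nodes at De Bruijn level `m` over the
terms of `H_k` of size `n`. -/
noncomputable def avgAppLev (k m n : ℕ) : ℝ :=
  (∑ᶠ t ∈ LamLev k n, (LTerm.nappAt m 0 t : ℝ)) / (TLev k n : ℝ)

/-! With `b_i = 1 − 4(k−i)ρ² − 2ρ`, the driving term grows by exactly `4ρ²` per step and
`a_{j+2} = b_{j+2} − 4ρ²`. Hence the excess `a_{i+1} − a_i − 4ρ²` equals `2ρ√a_{j+2}` at the first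
step and `2ρ(√a_i − √a_{i−1})` afterwards, so it stays positive by induction because `√` is
strictly increasing. -/

theorem add_lt_of_sqrt_recurrence {a b : ℕ → ℝ} {c d : ℝ} {m n : ℕ} (hc : 0 < c) (hd : 0 ≤ d)
    (ha : 0 < a m) (hbase : a m + d = b m) (hb : ∀ i, m ≤ i → i < n → b (i + 1) = b i + d)
    (hrec : ∀ i, m ≤ i → i ≤ n → a (i + 1) = b i + c * √(a i)) :
    ∀ i, m ≤ i → i ≤ n → a i + d < a (i + 1) := by
  have pos_and_gap : ∀ i, m ≤ i → i ≤ n → 0 < a i ∧ a i + d < a (i + 1) := by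
    intro i hmi
    induction i, hmi using Nat.le_induction with
    | base =>
      intro hmn
      have : 0 < c * √(a m) := mul_pos hc (Real.sqrt_pos.2 ha)
      exact ⟨ha, by rw [hrec m le_rfl hmn]; linarith⟩
    | succ i hmi ih =>
      intro hin
      obtain ⟨hai, hgap⟩ := ih (by omega)
      have hsqrt : c * √(a i) < c * √(a (i + 1)) :=
        mul_lt_mul_of_pos_left (Real.sqrt_lt_sqrt hai.le (by linarith)) hc
      refine ⟨by linarith, ?_⟩
      rw [hrec (i + 1) (by omega) hin, hb i hmi (by omega)]
      linarith [hrec i hmi (by omega)]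
  exact fun i hmi hin => (pos_and_gap i hmi hin).2

theorem aseq_pos_and_increasing_general (k j : ℕ) (ρ : ℝ) (hρ : 0 < ρ)
    (hpos : 0 < 1 - 4 * ((k - j : ℕ) : ℝ) * ρ ^ 2 - 2 * ρ)
    (a : ℕ → ℝ)
    (hbase : a (j + 2) = 1 - 4 * ((k - j - 1 : ℕ) : ℝ) * ρ ^ 2 - 2 * ρ)
    (hrec : ∀ i : ℕ, j + 2 ≤ i → i ≤ k →
      a (i + 1) = 1 - 4 * ((k - i : ℕ) : ℝ) * ρ ^ 2 - 2 * ρ + 2 * ρ * Real.sqrt (a i)) :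
    0 < a (j + 2) ∧
    (∀ i : ℕ, j + 2 ≤ i → i ≤ k → a i + 4 * ρ ^ 2 < a (i + 1)) ∧
    (∀ i : ℕ, j + 2 ≤ i → i ≤ k + 1 → 0 < a i) ∧
    (∀ i₁ i₂ : ℕ, j + 2 ≤ i₁ → i₁ < i₂ → i₂ ≤ k + 1 → a i₁ < a i₂) := by
  have ha₀ : 0 < a (j + 2) := hpos.trans_le <| by
    rw [hbase]; gcongr 1 - 4 * ?_ * ρ ^ 2 - 2 * ρ; exact_mod_cast Nat.sub_le _ _
  have hgap : ∀ i, j + 2 ≤ i → i ≤ k → a i + 4 * ρ ^ 2 < a (i + 1) := by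
    intro i hi hik
    refine add_lt_of_sqrt_recurrence (b := fun i => 1 - 4 * ((k - i : ℕ) : ℝ) * ρ ^ 2 - 2 * ρ)
      (by positivity) (by positivity) ha₀ ?_ ?_ hrec i hi hik
    · rw [hbase, show k - j - 1 = k - (j + 2) + 1 by omega]
      push_cast; ring
    · intro i _ hik
      rw [show k - i = k - (i + 1) + 1 by omega]
      push_cast; ring
  have hmono : StrictMonoOn a (Set.Icc (j + 2) (k + 1)) :=
    strictMonoOn_of_lt_add_one Set.ordConnected_Icc fun i _ hi hi₁ =>
      (lt_add_of_pos_right _ (by positivity)).trans (hgap i hi.1 (Nat.le_of_succ_le_succ hi₁.2))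
  refine ⟨ha₀, hgap, fun i hi hik => ?_, fun i₁ i₂ h₁ h₁₂ h₂ =>
    hmono ⟨h₁, by omega⟩ ⟨by omega, h₂⟩ h₁₂⟩
  exact ha₀.trans_le (hmono.monotoneOn ⟨le_rfl, by omega⟩ ⟨hi, hik⟩ hi)

/-- Positivity and monotonicity of the constants `a_i` in the
expansions of the outer radicands: with `a_{j+2} = 1 − 4(k−j−1)ρ² − 2ρ` and
`a_{i+1} = 1 − 4(k−i)ρ² − 2ρ + 2ρ√(a_i)` for `j+2 ≤ i ≤ k`, one has
`a_{j+2} > 0`, `a_{i+1} > a_i + 4ρ²`; in particular all `a_i` are positive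
and the sequence is strictly increasing. -/
theorem aseq_pos_and_increasing (k j : ℕ) (hjk : j + 1 ≤ k) (ρ : ℝ) (hρ : 0 < ρ)
    (hpos : 0 < 1 - 4 * ((k - j : ℕ) : ℝ) * ρ ^ 2 - 2 * ρ)
    (a : ℕ → ℝ)
    (hbase : a (j + 2) = 1 - 4 * ((k - j - 1 : ℕ) : ℝ) * ρ ^ 2 - 2 * ρ)
    (hrec : ∀ i : ℕ, j + 2 ≤ i → i ≤ k →
      a (i + 1) = 1 - 4 * ((k - i : ℕ) : ℝ) * ρ ^ 2 - 2 * ρ + 2 * ρ * Real.sqrt (a i)) :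
    0 < a (j + 2) ∧
    (∀ i : ℕ, j + 2 ≤ i → i ≤ k → a i + 4 * ρ ^ 2 < a (i + 1)) ∧
    (∀ i : ℕ, j + 2 ≤ i → i ≤ k + 1 → 0 < a i) ∧
    (∀ i₁ i₂ : ℕ, j + 2 ≤ i₁ → i₁ < i₂ → i₂ ≤ k + 1 → a i₁ < a i₂) :=
  aseq_pos_and_increasing_general k j ρ hρ hpos a hbase hrec
end

section
/- Fix an integer k ≥ 1 and define real functions R_i (1 ≤ i ≤ k+1) by R_1(z) = 1 − 4kz² and R_{i+1}(z) = 1 − 4(k−i)z² − 2z + 2z√(R_i(z)) for 1 ≤ i ≤ k. Let z > 0 and let 1 ≤ m ≤ k+1 be such that R_i(z) > 0 for all 1 ≤ i < m. Then R_m(z) < 1, and R_m is differentiable at z with negative derivative, i.e., there exists r < 0 such that R_m has derivative r at z. -/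
open Filter

/-- The nested radicands `R_1(z) = 1 − 4kz²`,
`R_{i+1}(z) = 1 − 4(k−i)z² − 2z + 2z√(R_i(z))`. -/
noncomputable def Rfun (k : ℕ) : ℕ → ℝ → ℝ
  | 0, _ => 1
  | 1, z => 1 - 4 * k * z ^ 2
  | i + 2, z => 1 - 4 * ((k - (i + 1) : ℕ) : ℝ) * z ^ 2 - 2 * z
      + 2 * z * Real.sqrt (Rfun k (i + 1) z)

/-! By induction on `m`. With `s = √R_{m-1}(z) ∈ (0, 1)` one has
`R_m(z) = 1 − 4cz² − 2z(1 − s) < 1` and `R_m'(z) = −8cz − 2(1 − s) + z R_{m-1}'(z) / s`,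
a sum of two nonpositive terms and a negative one; at the start, `R_1'(z) = −8kz < 0`. -/

noncomputable def radicandStep (c : ℝ) (f : ℝ → ℝ) (y : ℝ) : ℝ :=
  1 - 4 * c * y ^ 2 - 2 * y + 2 * y * Real.sqrt (f y)

theorem Rfun_add_two (k i : ℕ) :
    Rfun k (i + 2) = radicandStep ((k - (i + 1) : ℕ) : ℝ) (Rfun k (i + 1)) :=
  rfl

theorem Rfun_one_lt_one {k : ℕ} (hk : 0 < k) {z : ℝ} (hz : z ≠ 0) : Rfun k 1 z < 1 := by
  have : (0 : ℝ) < 4 * k * z ^ 2 := by positivity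
  show 1 - 4 * k * z ^ 2 < 1
  linarith

theorem hasDerivAt_Rfun_one (k : ℕ) (z : ℝ) : HasDerivAt (Rfun k 1) (-(8 * k * z)) z := by
  refine (((hasDerivAt_pow 2 z).const_mul (4 * (k : ℝ))).const_sub 1).congr_deriv ?_
  push_cast
  ring

theorem sqrt_lt_one_of_lt_one {x : ℝ} (hx : x < 1) : Real.sqrt x < 1 :=
  (Real.sqrt_lt' one_pos).mpr (by rwa [one_pow])

section radicandStep

variable {c z x r : ℝ} {f : ℝ → ℝ}

theorem radicandStep_lt_one (hc : 0 ≤ c) (hz : 0 < z) (hf : f z < 1) :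
    radicandStep c f z < 1 := by
  have hcz : 0 ≤ c * z ^ 2 := by positivity
  have hgap : 0 < z * (1 - Real.sqrt (f z)) :=
    mul_pos hz (by linarith [sqrt_lt_one_of_lt_one hf])
  unfold radicandStep
  linarith

theorem hasDerivAt_radicandStep (hf : HasDerivAt f r z) (hf0 : 0 < f z) :
    HasDerivAt (radicandStep c f)
      (-8 * c * z - 2 + 2 * Real.sqrt (f z) + z * r / Real.sqrt (f z)) z := by
  have hsqrt := hf.sqrt hf0.ne'
  have hs : Real.sqrt (f z) ≠ 0 := (Real.sqrt_pos.mpr hf0).ne'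
  refine ((((hasDerivAt_pow 2 z).const_mul (4 * c)).const_sub 1).sub
    ((hasDerivAt_id' z).const_mul 2)).add (((hasDerivAt_id' z).const_mul 2).mul hsqrt)
    |>.congr_deriv ?_
  field_simp
  ring

theorem radicandStep_deriv_neg (hc : 0 ≤ c) (hz : 0 < z) (hr : r < 0) (hx0 : 0 < x)
    (hx1 : x < 1) : -8 * c * z - 2 + 2 * Real.sqrt x + z * r / Real.sqrt x < 0 := by
  have hs0 : 0 < Real.sqrt x := Real.sqrt_pos.mpr hx0
  have hs1 : Real.sqrt x < 1 := sqrt_lt_one_of_lt_one hx1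
  have hcz : 0 ≤ c * z := mul_nonneg hc hz.le
  have : z * r / Real.sqrt x < 0 := div_neg_of_neg_of_pos (mul_neg_of_pos_of_neg hz hr) hs0
  linarith

end radicandStep

theorem radicand_lt_one_and_deriv_neg_general (k : ℕ) (hk : 1 ≤ k) (z : ℝ) (hz : 0 < z)
    (m : ℕ) (hm1 : 1 ≤ m)
    (hpos : ∀ i : ℕ, 1 ≤ i → i < m → 0 < Rfun k i z) :
    Rfun k m z < 1 ∧ ∃ r : ℝ, r < 0 ∧ HasDerivAt (Rfun k m) r z := by
  induction m, hm1 using Nat.le_induction with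
  | base =>
    have hk' : (0 : ℝ) < k := by exact_mod_cast hk
    have hr : -(8 * k * z) < 0 := neg_neg_of_pos (by positivity)
    exact ⟨Rfun_one_lt_one hk hz.ne', _, hr, hasDerivAt_Rfun_one k z⟩
  | succ n hn ih =>
    obtain ⟨hlt, r, hr, hderiv⟩ := ih fun i hi1 hi2 => hpos i hi1 (by omega)
    obtain ⟨i, rfl⟩ : ∃ i, n = i + 1 := ⟨n - 1, by omega⟩
    have hRpos : 0 < Rfun k (i + 1) z := hpos (i + 1) hn (by omega)
    have hc : (0 : ℝ) ≤ ((k - (i + 1) : ℕ) : ℝ) := Nat.cast_nonneg _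
    rw [Rfun_add_two]
    exact ⟨radicandStep_lt_one hc hz hlt, _, radicandStep_deriv_neg hc hz hr hRpos hlt,
      hasDerivAt_radicandStep hderiv hRpos⟩

/-- For `k ≥ 1`, `z > 0` and `1 ≤ m ≤ k+1` such that
`R_i(z) > 0` for all `1 ≤ i < m`, one has `R_m(z) < 1` and `R_m` is
differentiable at `z` with negative derivative. -/
theorem radicand_lt_one_and_deriv_neg (k : ℕ) (hk : 1 ≤ k) (z : ℝ) (hz : 0 < z)
    (m : ℕ) (hm1 : 1 ≤ m) (hm2 : m ≤ k + 1)
    (hpos : ∀ i : ℕ, 1 ≤ i → i < m → 0 < Rfun k i z) :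
    Rfun k m z < 1 ∧ ∃ r : ℝ, r < 0 ∧ HasDerivAt (Rfun k m) r z :=
  radicand_lt_one_and_deriv_neg_general k hk z hz m hm1 hpos
end
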